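/- arXiv:math/0611887 — 2 statements merged into one kernel-verified Lean document; each statement's English description precedes it below -/
import Mathlib

section
/- If f : M → M' is a map between modules over Z[s^{±1}, t^{±1}] satisfying f(0) = 0, f(t·x + (1−st)·y) = t·f(x) + (1−st)·f(y) for all x, y, and f(s·x) = s·f(x) for all x, then f also satisfies f(t⁻¹·x + (1−s⁻¹t⁻¹)·y) = t⁻¹·f(x) + (1−s⁻¹t⁻¹)·f(y) for all x, y, and f(s⁻¹·x) = s⁻¹·f(x) for all x. -/
noncomputable section

/-- The Laurent polynomial ring `ℤ[s^{±1}, t^{±1}]` in two variables,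
realized as the group algebra of `ℤ × ℤ` over `ℤ`. -/
abbrev L : Type := AddMonoidAlgebra ℤ (ℤ × ℤ)

/-- The variable `s`. -/
def sL : L := AddMonoidAlgebra.single (1, 0) 1
/-- The variable `t`. -/
def tL : L := AddMonoidAlgebra.single (0, 1) 1
/-- The inverse `s⁻¹`. -/
def sLi : L := AddMonoidAlgebra.single (-1, 0) 1
/-- The inverse `t⁻¹`. -/
def tLi : L := AddMonoidAlgebra.single (0, -1) 1

/-- `s` as a unit of `L`. -/
def sU : Lˣ where
  val := sL
  inv := sLi
  val_inv := by
    simp [sL, sLi, AddMonoidAlgebra.single_mul_single, AddMonoidAlgebra.one_def, Prod.ext_iff]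
    rfl
  inv_val := by
    simp [sL, sLi, AddMonoidAlgebra.single_mul_single, AddMonoidAlgebra.one_def, Prod.ext_iff]
    rfl

/-- The submodule `(1-st)M`. -/
def Dsub (M : Type) [AddCommGroup M] [Module L M] : Submodule L M :=
  LinearMap.range (LinearMap.lsmul L M (1 - sL * tL))

/-- The `s`-orbit `O_s(X)` of a subset `X ⊆ M`. -/
def Os {M : Type} [AddCommGroup M] [Module L M] (X : Set M) : Set M :=
  { y | ∃ (n : ℤ) (x : M), x ∈ X ∧ y = ((sU ^ n : Lˣ) : L) • x }

/-- `A` is a set of coset representatives for `M/(1-st)M`. -/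
def IsCR (M : Type) [AddCommGroup M] [Module L M] (A : Set M) : Prop :=
  ∀ x : M, ∃! a, a ∈ A ∧ x - a ∈ Dsub M

/-- `f` preserves the four Alexander biquandle operations. -/
def IsBqHom {M M' : Type} [AddCommGroup M] [Module L M] [AddCommGroup M'] [Module L M']
    (f : M → M') : Prop :=
  (∀ x y : M, f (tL • x + (1 - sL * tL) • y) = tL • f x + (1 - sL * tL) • f y) ∧
  (∀ x : M, f (sL • x) = sL • f x) ∧
  (∀ x y : M, f (tLi • x + (1 - sLi * tLi) • y) = tLi • f x + (1 - sLi * tLi) • f y) ∧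
  (∀ x : M, f (sLi • x) = sLi • f x)

/-!
Putting `y = 0` in the first operation shows that `f` commutes with `t`, and then putting
`t⁻¹ • m` for `x` shows `f (m + (1 - st) • y) = f m + (1 - st) • f y`. Since
`1 - s⁻¹t⁻¹ = -(1 - st) s⁻¹t⁻¹`, the barred operation `t⁻¹ • x + (1 - s⁻¹t⁻¹) • y` is the
translate of `t⁻¹ • x` by `(1 - st) • (-s⁻¹t⁻¹ • y)`, and `f` commutes with `s⁻¹` and `t⁻¹`
because it commutes with the units `s` and `t`.
-/

section AlexanderBiquandle

variable {R M M' : Type*} [CommRing R] [AddCommGroup M] [Module R M] [AddCommGroup M'] [Module R M']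
  {f : M → M'}

theorem map_inv_smul_of_map_smul (u : Rˣ) (hu : ∀ x : M, f ((u : R) • x) = (u : R) • f x)
    (x : M) : f ((↑u⁻¹ : R) • x) = (↑u⁻¹ : R) • f x := by
  have h := hu ((↑u⁻¹ : R) • x)
  rw [smul_smul, Units.mul_inv, one_smul] at h
  rw [h, smul_smul, Units.inv_mul, one_smul]

variable (s t : Rˣ) (h0 : f 0 = 0)
  (h1 : ∀ x y : M, f ((t : R) • x + (1 - s * t : R) • y) = (t : R) • f x + (1 - s * t : R) • f y)
include h0 h1

theorem map_smul_of_map_alexander (x : M) : f ((t : R) • x) = (t : R) • f x := by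
  simpa [h0] using h1 x 0

theorem map_add_smul_of_map_alexander (m y : M) :
    f (m + (1 - s * t : R) • y) = f m + (1 - s * t : R) • f y := by
  have h := h1 ((↑t⁻¹ : R) • m) y
  rwa [map_inv_smul_of_map_smul t (map_smul_of_map_alexander s t h0 h1), smul_smul, smul_smul,
    Units.mul_inv, one_smul, one_smul] at h

theorem map_sub_smul_of_map_alexander (m y : M) :
    f (m - (1 - s * t : R) • y) = f m - (1 - s * t : R) • f y := by
  rw [eq_sub_iff_add_eq, ← map_add_smul_of_map_alexander s t h0 h1, sub_add_cancel]

theorem map_barred_of_map_alexander (h2 : ∀ x : M, f ((s : R) • x) = (s : R) • f x) (x y : M) :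
    f ((↑t⁻¹ : R) • x + (1 - ↑s⁻¹ * ↑t⁻¹ : R) • y) =
      (↑t⁻¹ : R) • f x + (1 - ↑s⁻¹ * ↑t⁻¹ : R) • f y := by
  have hcoef : (1 - ↑s⁻¹ * ↑t⁻¹ : R) = -((1 - s * t : R) * (↑s⁻¹ * ↑t⁻¹)) := by
    linear_combination -((t : R) * ↑t⁻¹) * s.mul_inv - t.mul_inv
  have ht := map_inv_smul_of_map_smul t (map_smul_of_map_alexander s t h0 h1)
  have hst (z : M) : f ((↑s⁻¹ * ↑t⁻¹ : R) • z) = (↑s⁻¹ * ↑t⁻¹ : R) • f z := by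
    rw [mul_smul, map_inv_smul_of_map_smul s h2, ht, mul_smul]
  calc f ((↑t⁻¹ : R) • x + (1 - ↑s⁻¹ * ↑t⁻¹ : R) • y)
      = f ((↑t⁻¹ : R) • x - (1 - s * t : R) • (↑s⁻¹ * ↑t⁻¹ : R) • y) := by
        rw [hcoef]; congr 1; module
    _ = (↑t⁻¹ : R) • f x + (1 - ↑s⁻¹ * ↑t⁻¹ : R) • f y := by
        rw [map_sub_smul_of_map_alexander s t h0 h1, ht, hst, hcoef]; module

end AlexanderBiquandle

def tU : Lˣ where
  val := tL
  inv := tLi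
  val_inv := by
    rw [tL, tLi, AddMonoidAlgebra.single_mul_single]
    rfl
  inv_val := by
    rw [tL, tLi, AddMonoidAlgebra.single_mul_single]
    rfl

/-- Preserving the unbarred Alexander biquandle operations together with `f 0 = 0`
implies preservation of the barred operations. -/
theorem stmt_0 {M M' : Type} [AddCommGroup M] [Module L M] [AddCommGroup M'] [Module L M']
    (f : M → M') (h0 : f 0 = 0)
    (h1 : ∀ x y : M, f (tL • x + (1 - sL * tL) • y) = tL • f x + (1 - sL * tL) • f y)
    (h2 : ∀ x : M, f (sL • x) = sL • f x) :
    (∀ x y : M, f (tLi • x + (1 - sLi * tLi) • y) = tLi • f x + (1 - sLi * tLi) • f y) ∧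
    (∀ x : M, f (sLi • x) = sLi • f x) :=
  ⟨map_barred_of_map_alexander sU tU h0 h1 h2, map_inv_smul_of_map_smul sU h2⟩
end
end

section
/- Let f : M → M' be an isomorphism of Alexander biquandles with f(0) = 0. Then for all x, y ∈ (1−st)·M (i.e., elements of the submodule (1−st)M), f(x + y) = f(x) + f(y). Consequently the restriction of f to (1−st)M is additive. -/
noncomputable section

theorem map_add_smul_eq_map_add_map_smul {R M M' : Type*} [Semiring R] [AddCommMonoid M]
    [Module R M] [AddCommMonoid M'] [Module R M'] {f : M → M'} {t : R} (ht : IsUnit t) (c : R)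
    (hf : ∀ x y, f (t • x + c • y) = t • f x + c • f y) (h0 : f 0 = 0) (x y : M) :
    f (x + c • y) = f x + f (c • y) := by
  obtain ⟨u, rfl⟩ := ht
  have hx : f x = (u : R) • f (u⁻¹ • x) := by
    simpa [h0, ← Units.smul_def] using hf (u⁻¹ • x) 0
  have hy : f (c • y) = c • f y := by
    simpa [h0] using hf 0 y
  calc f (x + c • y) = f ((u : R) • (u⁻¹ • x) + c • y) := by
        rw [← Units.smul_def, smul_inv_smul]
    _ = f x + f (c • y) := by rw [hf, hx, hy]

theorem isUnit_tL : IsUnit tL :=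
  IsUnit.of_mul_eq_one tLi <| by
    simp [tL, tLi, AddMonoidAlgebra.single_mul_single, AddMonoidAlgebra.one_def]
    rfl

theorem stmt_5_general {M M' : Type} [AddCommGroup M] [Module L M] [AddCommGroup M'] [Module L M']
    (f : M → M') (hhom : IsBqHom f) (h0 : f 0 = 0) :
    ∀ x ∈ Dsub M, ∀ y ∈ Dsub M, f (x + y) = f x + f y := by
  rintro x - y ⟨v, rfl⟩
  exact map_add_smul_eq_map_add_map_smul isUnit_tL _ hhom.1 h0 x v

theorem stmt_5 {M M' : Type} [AddCommGroup M] [Module L M] [AddCommGroup M'] [Module L M']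
    (f : M → M') (hbij : Function.Bijective f) (hhom : IsBqHom f) (h0 : f 0 = 0) :
    ∀ x ∈ Dsub M, ∀ y ∈ Dsub M, f (x + y) = f x + f y :=
  stmt_5_general f hhom h0
end
end
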